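/- Let C be an associative conformal algebra with a conformal unit e, and let I be a nilpotent ideal of C. Suppose there exists x̄ ∈ C/I with x̄∘₀ē = x̄ and ē∘₁x̄ = ē, where ē = e + I. Then there exists a preimage x ∈ C of x̄ (x + I = x̄) such that x∘₀e = x and e∘₁x = e. -/
import Mathlib


section Abstract

/-- An (abstract) conformal algebra over `k`: a left `H = k[D]`-module with `k`-bilinear
`n`-th products satisfying locality and sesquilinearity (the action of `D` is the action of
the polynomial variable `X`; terms with index `-1` read as `0`, which is achieved below by
the vanishing scalar `(0 : k)` at `n = 0`). -/
class ConformalAlgebra (k : Type) [Field k] (C : Type) [AddCommGroup C] [Module k C]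
    [Module (Polynomial k) C] [IsScalarTower k (Polynomial k) C] where
  omul : ℕ → C → C → C
  omul_add_left : ∀ (n : ℕ) (a b c : C), omul n (a + b) c = omul n a c + omul n b c
  omul_add_right : ∀ (n : ℕ) (a b c : C), omul n a (b + c) = omul n a b + omul n a c
  omul_smul_left : ∀ (n : ℕ) (r : k) (a b : C), omul n (r • a) b = r • omul n a b
  omul_smul_right : ∀ (n : ℕ) (r : k) (a b : C), omul n a (r • b) = r • omul n a b
  locality : ∀ a b : C, ∃ N : ℕ, ∀ n ≥ N, omul n a b = 0
  sesq_left : ∀ (n : ℕ) (a b : C),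
    omul n ((Polynomial.X : Polynomial k) • a) b = -((n : k) • omul (n - 1) a b)
  sesq_right : ∀ (n : ℕ) (a b : C),
    omul n a ((Polynomial.X : Polynomial k) • b)
      = (Polynomial.X : Polynomial k) • omul n a b + (n : k) • omul (n - 1) a b

variable (k : Type) [Field k]
variable (C : Type) [AddCommGroup C] [Module k C] [Module (Polynomial k) C]
  [IsScalarTower k (Polynomial k) C] [ConformalAlgebra k C]

/-- Abbreviation for the `n`-th product of a conformal algebra. -/
noncomputable abbrev om (n : ℕ) (a b : C) : C := ConformalAlgebra.omul (k := k) n a b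

/-- The conformal algebra `C` is associative:
`(a ∘ₙ b) ∘ₘ c = ∑_{s=0}^{n} (-1)^s C(n,s) a ∘_{n-s} (b ∘_{m+s} c)`. -/
def ConformalAssoc : Prop :=
  ∀ (n m : ℕ) (a b c : C),
    om k C m (om k C n a b) c
      = ∑ s ∈ Finset.range (n + 1),
          (((-1 : k) ^ s) * (n.choose s : k)) • om k C (n - s) a (om k C (m + s) b c)

/-- `{a ∘ₙ b} = ∑_{s ≥ 0} ((-1)^{n+s}/s!) Dˢ (a ∘_{n+s} b)` (a finite sum by locality;
`Dˢ x = Xˢ • x`). -/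
noncomputable def obrace (n : ℕ) (a b : C) : C :=
  ∑ᶠ s : ℕ, (((-1 : k) ^ (n + s)) * ((s.factorial : k))⁻¹) •
    (((Polynomial.X : Polynomial k) ^ s) • om k C (n + s) a b)

/-- The `k`-span `A ∘_ω B` of all products `a ∘ₙ b`, `a ∈ A`, `b ∈ B`, `n ∈ ℕ`. -/
def omegaMulAbs (A B : Set C) : Set C :=
  (Submodule.span k {y | ∃ a ∈ A, ∃ b ∈ B, ∃ n : ℕ, y = om k C n a b} : Submodule k C)

/-- Powers `I⁽¹⁾ = I`, `I⁽ᵐ⁺¹⁾ = I⁽ᵐ⁾ ∘_ω I`. -/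
def idealPowAbs (I : Set C) : ℕ → Set C
  | 0 => I
  | m + 1 => omegaMulAbs k C (idealPowAbs I m) I

/-- The sequence of powers of `I` is eventually zero. -/
def IsNilpotentAbs (I : Set C) : Prop :=
  ∃ m : ℕ, ∀ m' ≥ m, idealPowAbs k C I m' ⊆ {0}

/-- `I` is an ideal of the conformal algebra `C`: an `H`-submodule with `a ∘ₙ b ∈ I` and
`b ∘ₙ a ∈ I` for all `a ∈ C`, `b ∈ I`, `n ∈ ℕ`. -/
structure IsConfIdeal (I : Set C) : Prop where
  zero_mem : (0 : C) ∈ I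
  add_mem : ∀ a ∈ I, ∀ b ∈ I, a + b ∈ I
  smul_mem : ∀ (p : Polynomial k), ∀ a ∈ I, p • a ∈ I
  omul_mem_left : ∀ (a : C), ∀ b ∈ I, ∀ n : ℕ, om k C n a b ∈ I
  omul_mem_right : ∀ (a : C), ∀ b ∈ I, ∀ n : ℕ, om k C n b a ∈ I

/-- `e` is an idempotent: `e ∘ₙ e = δ_{n,0} e`. -/
def IsConfIdempotent (e : C) : Prop :=
  ∀ n : ℕ, om k C n e e = if n = 0 then e else 0

/-- `e` is a conformal unit: an idempotent with `e ∘₀ x = x` for all `x`. -/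
def IsConfUnit (e : C) : Prop :=
  IsConfIdempotent k C e ∧ ∀ x : C, om k C 0 e x = x

/-- An ideal `P ≠ C` is prime if `A ∘_ω B ⊆ P` implies `A ⊆ P` or `B ⊆ P` for ideals `A, B`. -/
def IsPrimeConfIdeal (P : Set C) : Prop :=
  IsConfIdeal k C P ∧ P ≠ Set.univ ∧
    ∀ A B : Set C, IsConfIdeal k C A → IsConfIdeal k C B →
      omegaMulAbs k C A B ⊆ P → A ⊆ P ∨ B ⊆ P

end Abstract

section S8
variable (k : Type) [Field k] {C : Type} [AddCommGroup C] [Module k C]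
  [Module (Polynomial k) C] [IsScalarTower k (Polynomial k) C] [ConformalAlgebra k C]

lemma s8add_l (n : ℕ) (a b c : C) : om k C n (a + b) c = om k C n a c + om k C n b c :=
  ConformalAlgebra.omul_add_left n a b c
lemma s8add_r (n : ℕ) (a b c : C) : om k C n a (b + c) = om k C n a b + om k C n a c :=
  ConformalAlgebra.omul_add_right n a b c
lemma s8smul_l (n : ℕ) (r : k) (a b : C) : om k C n (r • a) b = r • om k C n a b :=
  ConformalAlgebra.omul_smul_left n r a b
lemma s8smul_r (n : ℕ) (r : k) (a b : C) : om k C n a (r • b) = r • om k C n a b :=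
  ConformalAlgebra.omul_smul_right n r a b

noncomputable def s8omL (n : ℕ) (a : C) : C →ₗ[k] C where
  toFun c := om k C n a c
  map_add' b c := s8add_r k n a b c
  map_smul' r c := s8smul_r k n r a c

noncomputable def s8omR (n : ℕ) (b : C) : C →ₗ[k] C where
  toFun c := om k C n c b
  map_add' a c := s8add_l k n a c b
  map_smul' r c := s8smul_l k n r c b

lemma s8zero_r (n : ℕ) (a : C) : om k C n a 0 = 0 := map_zero (s8omL k n a)
lemma s8zero_l (n : ℕ) (b : C) : om k C n 0 b = 0 := map_zero (s8omR k n b)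
lemma s8sub_r (n : ℕ) (a b c : C) : om k C n a (b - c) = om k C n a b - om k C n a c :=
  map_sub (s8omL k n a) b c
lemma s8sub_l (n : ℕ) (a b c : C) : om k C n (a - b) c = om k C n a c - om k C n b c :=
  map_sub (s8omR k n c) a b
lemma s8om_sum_l (n : ℕ) (a : C) (T : Finset ℕ) (f : ℕ → C) :
    om k C n a (∑ t ∈ T, f t) = ∑ t ∈ T, om k C n a (f t) := map_sum (s8omL k n a) f T
lemma s8om_sum_r (n : ℕ) (b : C) (T : Finset ℕ) (f : ℕ → C) :
    om k C n (∑ t ∈ T, f t) b = ∑ t ∈ T, om k C n (f t) b := map_sum (s8omR k n b) f T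

lemma s8a0 (hassoc : ConformalAssoc k C) (m : ℕ) (a b c : C) :
    om k C m (om k C 0 a b) c = om k C 0 a (om k C m b c) := by
  have h := hassoc 0 m a b c
  simpa using h

lemma s8a1 (hassoc : ConformalAssoc k C) (m : ℕ) (a b c : C) :
    om k C m (om k C 1 a b) c
      = om k C 1 a (om k C m b c) - om k C 0 a (om k C (m+1) b c) := by
  have h := hassoc 1 m a b c
  rw [Finset.sum_range_succ, Finset.sum_range_one] at h
  norm_num at h
  rw [h]
  abel

lemma s8dual1 (hassoc : ConformalAssoc k C) (m : ℕ) (a b c : C) :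
    om k C 1 a (om k C m b c)
      = om k C m (om k C 1 a b) c + om k C (m+1) (om k C 0 a b) c := by
  rw [s8a1 k hassoc m a b c, s8a0 k hassoc (m+1) a b c]
  abel

-- unit lemmas
lemma s8ee1 (e : C) (he : IsConfUnit k C e) : om k C 1 e e = 0 := by
  simpa using he.1 1

lemma s8Te (hassoc : ConformalAssoc k C) (e : C) (he : IsConfUnit k C e) (t : ℕ) (c : C) :
    om k C 1 e (om k C t e c) = om k C (t+1) e c := by
  rw [s8dual1 k hassoc t e e c, s8ee1 k e he, he.2 e, s8zero_l, zero_add]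

lemma s8alpha (hassoc : ConformalAssoc k C) (e : C) (he : IsConfUnit k C e) (c : C) :
    om k C 1 e (om k C 0 c e) = om k C 0 (om k C 1 e c) e + om k C 1 c e := by
  have h := s8dual1 k hassoc 0 e c e
  rwa [he.2 c] at h

lemma s8R2 (hassoc : ConformalAssoc k C) (e : C) (he : IsConfUnit k C e) (c : C) :
    om k C 0 (om k C 0 c e) e = om k C 0 c e := by
  rw [s8a0 k hassoc 0 c e e, he.2 e]

lemma s8SR (hassoc : ConformalAssoc k C) (e : C) (he : IsConfUnit k C e) (c : C) :
    om k C 1 (om k C 0 c e) e = 0 := by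
  rw [s8a0 k hassoc 1 c e e, s8ee1 k e he, s8zero_r]

lemma s8RTR (hassoc : ConformalAssoc k C) (e : C) (he : IsConfUnit k C e) (c : C) :
    om k C 0 (om k C 1 e (om k C 0 c e)) e = om k C 1 e (om k C 0 c e) := by
  have h := s8alpha k hassoc e he (om k C 0 c e)
  rw [s8R2 k hassoc e he c, s8SR k hassoc e he c, add_zero] at h
  exact h.symm

lemma s8wpT (hassoc : ConformalAssoc k C) (e : C) (he : IsConfUnit k C e) (c : C)
    (h1 : om k C 0 c e = c) (h2 : om k C 1 c e = 0) :
    om k C 0 (om k C 1 e c) e = om k C 1 e c ∧ om k C 1 (om k C 1 e c) e = 0 := by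
  have hA := s8alpha k hassoc e he c
  rw [h1, h2, add_zero] at hA
  refine ⟨hA.symm, ?_⟩
  have hRT2 := s8RTR k hassoc e he (om k C 1 e c)
  rw [← hA] at hRT2
  have hA2 := s8alpha k hassoc e he (om k C 1 e c)
  rw [← hA, hRT2] at hA2
  exact (left_eq_add.mp hA2)

lemma s8wpL (hassoc : ConformalAssoc k C) (e : C) (he : IsConfUnit k C e) (a c : C)
    (h1 : om k C 0 c e = c) (h2 : om k C 1 c e = 0) :
    om k C 0 (om k C 0 a c) e = om k C 0 a c ∧ om k C 1 (om k C 0 a c) e = 0 := by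
  constructor
  · rw [s8a0 k hassoc 0 a c e, h1]
  · rw [s8a0 k hassoc 1 a c e, h2, s8zero_r]

end S8

section S8b
variable (k : Type) [Field k] {C : Type} [AddCommGroup C] [Module k C]
  [Module (Polynomial k) C] [IsScalarTower k (Polynomial k) C] [ConformalAlgebra k C]

lemma s8smulk (I : Set C) (hI : IsConfIdeal k C I) (r : k) (a : C) (ha : a ∈ I) :
    r • a ∈ I := by
  have key : (Polynomial.C r) • a = r • a := by
    have h := algebraMap_smul (Polynomial k) r a
    rwa [Polynomial.algebraMap_eq] at h
  rw [← key]
  exact hI.smul_mem _ a ha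

lemma s8pow_sub (I : Set C) (hI : IsConfIdeal k C I) :
    ∀ m, idealPowAbs k C I m ⊆ I := by
  intro m
  induction m with
  | zero => exact subset_rfl
  | succ m ih =>
    intro y hy
    have hy' : y ∈ Submodule.span k
        {y | ∃ a ∈ idealPowAbs k C I m, ∃ b ∈ I, ∃ n : ℕ, y = om k C n a b} := hy
    refine Submodule.span_induction (p := fun z _ => z ∈ I) ?_ hI.zero_mem
      (fun a b _ _ ha hb => hI.add_mem a ha b hb)
      (fun r z _ hz => s8smulk k I hI r z hz) hy'
    rintro z ⟨a, _, b, hb, n, rfl⟩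
    exact hI.omul_mem_left a b hb n

lemma s8span_sub (I : Set C) (hI : IsConfIdeal k C I) (m : ℕ) {c : C}
    (hc : c ∈ Submodule.span k (idealPowAbs k C I m)) : c ∈ I := by
  refine Submodule.span_induction (p := fun z _ => z ∈ I)
    (fun z hz => s8pow_sub k I hI m hz) hI.zero_mem
    (fun a b _ _ ha hb => hI.add_mem a ha b hb)
    (fun r z _ hz => s8smulk k I hI r z hz) hc

lemma s8J_succ (I : Set C) (m : ℕ) :
    Submodule.span k (idealPowAbs k C I (m+1))
      = Submodule.span k {y | ∃ a ∈ idealPowAbs k C I m, ∃ b ∈ I, ∃ n : ℕ, y = om k C n a b} := by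
  have h : idealPowAbs k C I (m+1)
      = ((Submodule.span k {y | ∃ a ∈ idealPowAbs k C I m, ∃ b ∈ I, ∃ n : ℕ, y = om k C n a b} :
          Submodule k C) : Set C) := rfl
  rw [h, Submodule.span_span]

lemma s8mem_step (I : Set C) (hI : IsConfIdeal k C I) (m : ℕ) {p i : C}
    (hp : p ∈ Submodule.span k (idealPowAbs k C I m)) (hi : i ∈ I) (n : ℕ) :
    om k C n p i ∈ Submodule.span k (idealPowAbs k C I (m+1)) := by
  rw [s8J_succ k I m]
  refine Submodule.span_induction
    (p := fun q _ => om k C n q i ∈ Submodule.span k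
      {y | ∃ a ∈ idealPowAbs k C I m, ∃ b ∈ I, ∃ n : ℕ, y = om k C n a b}) ?_ ?_ ?_ ?_ hp
  · exact fun q hq => Submodule.subset_span ⟨q, hq, i, hi, n, rfl⟩
  · show om k C n (0:C) i ∈ _
    rw [s8zero_l]; exact Submodule.zero_mem _
  · intro a b _ _ ha hb
    show om k C n (a + b) i ∈ _
    rw [s8add_l]; exact Submodule.add_mem _ ha hb
  · intro r q _ hq
    show om k C n (r • q) i ∈ _
    rw [s8smul_l]; exact Submodule.smul_mem _ r hq

lemma s8J_T (hassoc : ConformalAssoc k C) (e : C) (he : IsConfUnit k C e)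
    (I : Set C) (hI : IsConfIdeal k C I) :
    ∀ m : ℕ, ∀ {c : C}, c ∈ Submodule.span k (idealPowAbs k C I m) →
      om k C 1 e c ∈ Submodule.span k (idealPowAbs k C I m) := by
  intro m
  induction m with
  | zero =>
    intro c hc
    refine Submodule.span_induction
      (p := fun z _ => om k C 1 e z ∈ Submodule.span k (idealPowAbs k C I 0)) ?_ ?_ ?_ ?_ hc
    · exact fun z hz => Submodule.subset_span (hI.omul_mem_left e z hz 1)
    · show om k C 1 e (0:C) ∈ _
      rw [s8zero_r]; exact Submodule.zero_mem _
    · intro a b _ _ ha hb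
      show om k C 1 e (a + b) ∈ _
      rw [s8add_r]; exact Submodule.add_mem _ ha hb
    · intro r z _ hz
      show om k C 1 e (r • z) ∈ _
      rw [s8smul_r]; exact Submodule.smul_mem _ r hz
  | succ m ih =>
    intro c hc
    rw [s8J_succ k I m] at hc
    refine Submodule.span_induction
      (p := fun z _ => om k C 1 e z ∈ Submodule.span k (idealPowAbs k C I (m+1))) ?_ ?_ ?_ ?_ hc
    · rintro z ⟨p, hp, i, hi, n, rfl⟩
      show om k C 1 e (om k C n p i) ∈ _
      rw [s8dual1 k hassoc n e p i, he.2 p]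
      refine Submodule.add_mem _ ?_ ?_
      · exact s8mem_step k I hI m (ih (Submodule.subset_span hp)) hi n
      · rw [s8J_succ k I m]; exact Submodule.subset_span ⟨p, hp, i, hi, n+1, rfl⟩
    · show om k C 1 e (0:C) ∈ _
      rw [s8zero_r]; exact Submodule.zero_mem _
    · intro a b _ _ ha hb
      show om k C 1 e (a + b) ∈ _
      rw [s8add_r]; exact Submodule.add_mem _ ha hb
    · intro r z _ hz
      show om k C 1 e (r • z) ∈ _
      rw [s8smul_r]; exact Submodule.smul_mem _ r hz

lemma s8J_L (hassoc : ConformalAssoc k C) (I : Set C) (hI : IsConfIdeal k C I) :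
    ∀ (m : ℕ) (a : C), ∀ {c : C}, c ∈ Submodule.span k (idealPowAbs k C I m) →
      om k C 0 a c ∈ Submodule.span k (idealPowAbs k C I m) := by
  intro m
  induction m with
  | zero =>
    intro a c hc
    refine Submodule.span_induction
      (p := fun z _ => om k C 0 a z ∈ Submodule.span k (idealPowAbs k C I 0)) ?_ ?_ ?_ ?_ hc
    · exact fun z hz => Submodule.subset_span (hI.omul_mem_left a z hz 0)
    · show om k C 0 a (0:C) ∈ _
      rw [s8zero_r]; exact Submodule.zero_mem _
    · intro u v _ _ hu hv
      show om k C 0 a (u + v) ∈ _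
      rw [s8add_r]; exact Submodule.add_mem _ hu hv
    · intro r z _ hz
      show om k C 0 a (r • z) ∈ _
      rw [s8smul_r]; exact Submodule.smul_mem _ r hz
  | succ m ihm =>
    intro a c hc
    rw [s8J_succ k I m] at hc
    refine Submodule.span_induction
      (p := fun z _ => om k C 0 a z ∈ Submodule.span k (idealPowAbs k C I (m+1))) ?_ ?_ ?_ ?_ hc
    · rintro z ⟨p, hp, i, hi, n, rfl⟩
      show om k C 0 a (om k C n p i) ∈ _
      rw [← s8a0 k hassoc n a p i]
      exact s8mem_step k I hI m (ihm a (Submodule.subset_span hp)) hi n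
    · show om k C 0 a (0:C) ∈ _
      rw [s8zero_r]; exact Submodule.zero_mem _
    · intro u v _ _ hu hv
      show om k C 0 a (u + v) ∈ _
      rw [s8add_r]; exact Submodule.add_mem _ hu hv
    · intro r z _ hz
      show om k C 0 a (r • z) ∈ _
      rw [s8smul_r]; exact Submodule.smul_mem _ r hz

noncomputable def s8F (x : C) : ℕ → C → C := fun a =>
  Nat.rec (motive := fun _ => C → C) id (fun _ ih c => om k C 0 x (ih c)) a

lemma s8F_zero (x c : C) : s8F k x 0 c = c := rfl
lemma s8F_succ (x : C) (a : ℕ) (c : C) : s8F k x (a+1) c = om k C 0 x (s8F k x a c) := rfl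

lemma s8F_mem (I : Set C) (hI : IsConfIdeal k C I) (x : C) :
    ∀ (a : ℕ) {c : C}, c ∈ I → s8F k x a c ∈ I := by
  intro a
  induction a with
  | zero => intro c hc; exact hc
  | succ a ih => intro c hc; exact hI.omul_mem_left x _ (ih hc) 0

lemma s8F_zero_val (x : C) : ∀ a, s8F k x a (0 : C) = 0 := by
  intro a
  induction a with
  | zero => rfl
  | succ a ih => rw [s8F_succ, ih, s8zero_r]

lemma s8F_W (hassoc : ConformalAssoc k C) (e : C) (he : IsConfUnit k C e) (x : C) :
    ∀ (a : ℕ) {c : C}, om k C 0 c e = c → om k C 1 c e = 0 →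
      om k C 0 (s8F k x a c) e = s8F k x a c ∧ om k C 1 (s8F k x a c) e = 0 := by
  intro a
  induction a with
  | zero => intro c h1 h2; exact ⟨h1, h2⟩
  | succ a ih => intro c h1 h2; exact s8wpL k hassoc e he x _ (ih h1 h2).1 (ih h1 h2).2

end S8b



/-- Let `C` be an associative conformal algebra with conformal unit `e` and
`I` a nilpotent ideal. If `x̄ ∈ C/I` (given by a representative `x₀ ∈ C`) satisfies
`x̄ ∘₀ ē = x̄` and `ē ∘₁ x̄ = ē`, then there is a preimage `x ∈ C` of `x̄` with `x ∘₀ e = x`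
and `e ∘₁ x = e`. -/
theorem stmt8 (k : Type) [Field k] [IsAlgClosed k] [CharZero k]
    (C : Type) [AddCommGroup C] [Module k C] [Module (Polynomial k) C]
    [IsScalarTower k (Polynomial k) C] [ConformalAlgebra k C]
    (hassoc : ConformalAssoc k C)
    (e : C) (he : IsConfUnit k C e)
    (I : Set C) (hI : IsConfIdeal k C I) (hInil : IsNilpotentAbs k C I)
    (x₀ : C)
    (hx₀ : om k C 0 x₀ e - x₀ ∈ I)
    (hex₀ : om k C 1 e x₀ - e ∈ I) :
    ∃ x : C, x - x₀ ∈ I ∧ om k C 0 x e = x ∧ om k C 1 e x = e := by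
  classical
  -- scalar identity needed in the telescoping sum
  have hcoefγ : ∀ t : ℕ,
      ((-1:k)^t * (((t+1).factorial : k))⁻¹) * ((t:k)+1) = (-1:k)^t * ((t.factorial : k))⁻¹ := by
    intro t
    have h1 : ((t:k)+1) ≠ 0 := Nat.cast_add_one_ne_zero t
    have h2 : ((t.factorial : k)) ≠ 0 := Nat.cast_ne_zero.mpr t.factorial_ne_zero
    have h3 : (((t+1).factorial : k)) = ((t:k)+1) * (t.factorial : k) := by
      rw [Nat.factorial_succ]; push_cast; ring
    rw [h3, mul_inv]
    field_simp
  have key : ∀ m : ℕ, ∃ x : C, x - x₀ ∈ I ∧ om k C 0 x e = x ∧ om k C 1 x e = 0 ∧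
      om k C 1 e x - e ∈ Submodule.span k (idealPowAbs k C I m) := by
    intro m
    induction m with
    | zero =>
      refine ⟨om k C 0 x₀ e, hx₀, s8R2 k hassoc e he x₀, s8SR k hassoc e he x₀, ?_⟩
      have hneg : x₀ - om k C 0 x₀ e ∈ I := by
        have h := s8smulk k I hI (-1) _ hx₀
        rwa [neg_smul, one_smul, neg_sub] at h
      have heq : om k C 1 e (om k C 0 x₀ e) - e
          = om k C 0 (om k C 1 e x₀ - e) e + om k C 1 (x₀ - om k C 0 x₀ e) e := by
        rw [s8alpha k hassoc e he x₀, s8sub_l, s8sub_l, he.2 e, s8SR k hassoc e he x₀]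
        abel
      rw [heq]
      exact Submodule.subset_span
        (hI.add_mem _ (hI.omul_mem_right e _ hex₀ 0) _ (hI.omul_mem_right e _ hneg 1))
    | succ m ih =>
      obtain ⟨x, hxI, hRx, hSx, hTx⟩ := ih
      set s : C := om k C 1 e x - e with hs
      have hsJ : s ∈ Submodule.span k (idealPowAbs k C I m) := hTx
      have hsI : s ∈ I := s8span_sub k I hI m hsJ
      have hWTx := s8wpT k hassoc e he x hRx hSx
      have hWs1 : om k C 0 s e = s := by
        rw [hs, s8sub_l, hWTx.1, he.2 e]
      have hWs2 : om k C 1 s e = 0 := by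
        rw [hs, s8sub_l, hWTx.2, s8ee1 k e he, sub_zero]
      obtain ⟨N, hN0⟩ := ConformalAlgebra.locality (k := k) e s
      have hN : ∀ n ≥ N, om k C n e s = 0 := hN0
      have hu0 : om k C 0 e s = s := he.2 s
      have hTu : ∀ t : ℕ, om k C 1 e (om k C t e s) = om k C (t+1) e s :=
        fun t => s8Te k hassoc e he t s
      have huI : ∀ t, om k C t e s ∈ I := fun t => hI.omul_mem_left e s hsI t
      have hWu : ∀ t, om k C 0 (om k C t e s) e = om k C t e s
          ∧ om k C 1 (om k C t e s) e = 0 := by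
        intro t
        induction t with
        | zero => rw [hu0]; exact ⟨hWs1, hWs2⟩
        | succ t iht =>
          have h := s8wpT k hassoc e he (om k C t e s) iht.1 iht.2
          rwa [hTu t] at h
      have hTxe : om k C 1 e x = s + e := by rw [hs]; abel
      have E1 : ∀ j : C, om k C 1 e (om k C 0 x j)
          = j + om k C 0 s j + om k C 0 x (om k C 1 e j) := by
        intro j
        have hd := s8dual1 k hassoc 0 e x j
        rw [he.2 x] at hd
        have h1 := s8a1 k hassoc 0 x e j
        rw [hSx, s8zero_l, he.2 j] at h1
        simp only [zero_add] at h1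
        have h2 : om k C 1 x j = om k C 0 x (om k C 1 e j) := sub_eq_zero.mp h1.symm
        rw [hd, hTxe, s8add_l, he.2 j, h2]
        abel
      have E2 : ∀ (a : ℕ) (j : C), j ∈ I →
          om k C 1 e (s8F k x (a+1) j)
            - (((a:k)+1) • s8F k x a j + s8F k x (a+1) (om k C 1 e j))
            ∈ Submodule.span k (idealPowAbs k C I (m+1)) := by
        intro a
        induction a with
        | zero =>
          intro j hj
          have key0 : om k C 1 e (s8F k x (0+1) j)
              - ((((0:ℕ):k)+1) • s8F k x 0 j + s8F k x (0+1) (om k C 1 e j))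
              = om k C 0 s j := by
            rw [s8F_succ, s8F_succ, s8F_zero, s8F_zero, E1 j]
            push_cast
            module
          rw [key0]
          exact s8mem_step k I hI m hsJ hj 0
        | succ a iha =>
          intro j hj
          have hj' : s8F k x (a+1) j ∈ I := s8F_mem k I hI x (a+1) hj
          have key1 : om k C 1 e (s8F k x (a+1+1) j)
              - ((((a+1:ℕ):k)+1) • s8F k x (a+1) j + s8F k x (a+1+1) (om k C 1 e j))
              = om k C 0 s (s8F k x (a+1) j)
                + om k C 0 x (om k C 1 e (s8F k x (a+1) j)
                  - (((a:k)+1) • s8F k x a j + s8F k x (a+1) (om k C 1 e j))) := by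
            rw [s8F_succ k x (a+1) j, E1 (s8F k x (a+1) j),
              s8F_succ k x (a+1) (om k C 1 e j), s8sub_r, s8add_r, s8smul_r,
              s8F_succ k x a j]
            push_cast
            module
          rw [key1]
          exact Submodule.add_mem _ (s8mem_step k I hI m hsJ hj' 0)
            (s8J_L k hassoc I hI (m+1) x (iha j hj))
      -- the correcting element y
      set y : C := ∑ t ∈ Finset.range N,
        ((-1:k)^t * (((t+1).factorial : k))⁻¹) • s8F k x (t+1) (om k C t e s) with hy
      have hyI : y ∈ I := by
        rw [hy]
        refine Finset.sum_induction _ (· ∈ I) (fun a b ha hb => hI.add_mem a ha b hb)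
          hI.zero_mem ?_
        intro t _
        exact s8smulk k I hI _ _ (s8F_mem k I hI x (t+1) (huI t))
      have hRy : om k C 0 y e = y := by
        rw [hy, s8om_sum_r k 0 e]
        refine Finset.sum_congr rfl fun t _ => ?_
        rw [s8smul_l, (s8F_W k hassoc e he x (t+1) (hWu t).1 (hWu t).2).1]
      have hSy : om k C 1 y e = 0 := by
        rw [hy, s8om_sum_r k 1 e]
        refine Finset.sum_eq_zero fun t _ => ?_
        rw [s8smul_l, (s8F_W k hassoc e he x (t+1) (hWu t).1 (hWu t).2).2, smul_zero]
      have hTyexp : om k C 1 e y = ∑ t ∈ Finset.range N,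
          ((-1:k)^t * (((t+1).factorial:k))⁻¹) • om k C 1 e (s8F k x (t+1) (om k C t e s)) := by
        rw [hy, s8om_sum_l k 1 e]
        exact Finset.sum_congr rfl fun t _ => s8smul_r k 1 _ e _
      have hdmem : ∀ t : ℕ, om k C 1 e (s8F k x (t+1) (om k C t e s))
          - (((t:k)+1) • s8F k x t (om k C t e s) + s8F k x (t+1) (om k C (t+1) e s))
          ∈ Submodule.span k (idealPowAbs k C I (m+1)) := by
        intro t
        have h := E2 t (om k C t e s) (huI t)
        rwa [hTu t] at h
      have htel : ∑ t ∈ Finset.range N,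
          (((-1:k)^t * ((t.factorial:k))⁻¹) • s8F k x t (om k C t e s)
            - ((-1:k)^(t+1) * (((t+1).factorial:k))⁻¹) • s8F k x (t+1) (om k C (t+1) e s))
          = s := by
        have h1 : (∑ t ∈ Finset.range N,
            (((-1:k)^t * ((t.factorial:k))⁻¹) • s8F k x t (om k C t e s)
              - ((-1:k)^(t+1) * (((t+1).factorial:k))⁻¹) • s8F k x (t+1) (om k C (t+1) e s)))
            = ((-1:k)^0 * (((0:ℕ).factorial:k))⁻¹) • s8F k x 0 (om k C 0 e s)
              - ((-1:k)^N * ((N.factorial:k))⁻¹) • s8F k x N (om k C N e s) :=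
          Finset.sum_range_sub'
            (fun t => ((-1:k)^t * ((t.factorial:k))⁻¹) • s8F k x t (om k C t e s)) N
        rw [h1, hN N le_rfl, s8F_zero_val, smul_zero, sub_zero, hu0]
        norm_num [s8F_zero]
      have hterm : ∀ t : ℕ,
          ((-1:k)^t * (((t+1).factorial:k))⁻¹) • om k C 1 e (s8F k x (t+1) (om k C t e s))
          = ((-1:k)^t * (((t+1).factorial:k))⁻¹) •
              (om k C 1 e (s8F k x (t+1) (om k C t e s))
                - (((t:k)+1) • s8F k x t (om k C t e s) + s8F k x (t+1) (om k C (t+1) e s)))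
            + (((-1:k)^t * ((t.factorial:k))⁻¹) • s8F k x t (om k C t e s)
              - ((-1:k)^(t+1) * (((t+1).factorial:k))⁻¹) • s8F k x (t+1) (om k C (t+1) e s)) := by
        intro t
        rw [smul_sub, smul_add, smul_smul, hcoefγ t]
        module
      have hsum1 : ∑ t ∈ Finset.range N,
          ((-1:k)^t * (((t+1).factorial:k))⁻¹) • om k C 1 e (s8F k x (t+1) (om k C t e s))
          = (∑ t ∈ Finset.range N, ((-1:k)^t * (((t+1).factorial:k))⁻¹) •
              (om k C 1 e (s8F k x (t+1) (om k C t e s))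
                - (((t:k)+1) • s8F k x t (om k C t e s) + s8F k x (t+1) (om k C (t+1) e s))))
            + ∑ t ∈ Finset.range N,
              (((-1:k)^t * ((t.factorial:k))⁻¹) • s8F k x t (om k C t e s)
                - ((-1:k)^(t+1) * (((t+1).factorial:k))⁻¹) • s8F k x (t+1) (om k C (t+1) e s)) := by
        rw [← Finset.sum_add_distrib]
        exact Finset.sum_congr rfl fun t _ => hterm t
      have hTy : om k C 1 e y - s ∈ Submodule.span k (idealPowAbs k C I (m+1)) := by
        have hfin : om k C 1 e y - s = ∑ t ∈ Finset.range N,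
            ((-1:k)^t * (((t+1).factorial:k))⁻¹) •
              (om k C 1 e (s8F k x (t+1) (om k C t e s))
                - (((t:k)+1) • s8F k x t (om k C t e s) + s8F k x (t+1) (om k C (t+1) e s))) := by
          rw [hTyexp, hsum1, htel]
          abel
        rw [hfin]
        exact Submodule.sum_mem _ fun t _ => Submodule.smul_mem _ _ (hdmem t)
      refine ⟨x - y, ?_, ?_, ?_, ?_⟩
      · have h : x - y - x₀ = (x - x₀) + -y := by abel
        rw [h]
        refine hI.add_mem _ hxI _ ?_
        have h2 := s8smulk k I hI (-1) y hyI
        rwa [neg_smul, one_smul] at h2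
      · rw [s8sub_l, hRx, hRy]
      · rw [s8sub_l, hSx, hSy, sub_zero]
      · have h : om k C 1 e (x - y) - e = -(om k C 1 e y - s) := by
          rw [s8sub_r, hs]
          abel
        rw [h]
        exact Submodule.neg_mem _ hTy
  obtain ⟨M, hM⟩ := hInil
  obtain ⟨x, hxI, hRx, _, hTx⟩ := key M
  have hT0 : om k C 1 e x - e = 0 := by
    have hle : Submodule.span k (idealPowAbs k C I M) ≤ ⊥ := by
      rw [Submodule.span_le]
      intro z hz
      simpa using hM M le_rfl hz
    exact (Submodule.mem_bot k).mp (hle hTx)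
  exact ⟨x, hxI, hRx, by rwa [sub_eq_zero] at hT0⟩
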